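/- For every integer n ≥ 1, the number of order ideals of the poset P_n({b,g}) equals the n-th Catalan number C_n = (1/(n+1))·binomial(2n,n). -/

import Mathlib

open scoped Classical

noncomputable section

/-- `W2 n` is the set `{(a,b) ∈ ℤ≥0² : a + b ≤ n - 2}`. -/
def W2 (n : ℕ) : Finset (ℤ × ℤ) :=
  (Finset.Icc (0:ℤ) (n:ℤ) ×ˢ Finset.Icc (0:ℤ) (n:ℤ)).filter
    (fun p => p.1 + p.2 ≤ (n:ℤ) - 2)

/-- One step: add a vector of `S`, staying inside `W`. -/
def step2 (S : Set (ℤ × ℤ)) (W : Finset (ℤ × ℤ)) (u v : ℤ × ℤ) : Prop :=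
  u ∈ W ∧ v ∈ W ∧ ∃ e ∈ S, v = u + e

/-- The order relation: reflexive-transitive closure of `step2`, restricted to `W`. -/
def le2 (S : Set (ℤ × ℤ)) (W : Finset (ℤ × ℤ)) (u v : ℤ × ℤ) : Prop :=
  u ∈ W ∧ v ∈ W ∧ Relation.ReflTransGen (step2 S W) u v

/-- An order ideal: a downward closed subset of `W`. -/
def IsIdeal2 (S : Set (ℤ × ℤ)) (W : Finset (ℤ × ℤ)) (I : Finset (ℤ × ℤ)) : Prop :=
  I ⊆ W ∧ ∀ u v : ℤ × ℤ, le2 S W u v → v ∈ I → u ∈ I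

/-- The set of all order ideals. -/
def ideals2 (S : Set (ℤ × ℤ)) (W : Finset (ℤ × ℤ)) : Finset (Finset (ℤ × ℤ)) :=
  W.powerset.filter (fun I => IsIdeal2 S W I)

/-- The step vectors of the poset `P_n`: r = (1,0), g = (0,1), b = (-1,1). -/
def Pvec : Set (ℤ × ℤ) := {(1,0), (0,1), (-1,1)}

/-- The step vectors of the poset `P_n({b,g})`: g = (0,1), b = (-1,1). -/
def BGvec : Set (ℤ × ℤ) := {(0,1), (-1,1)}

end

/-! ### Auxiliary development -/

noncomputable section CatAux

open Finset

/-- Natural-number view of a `Fin`-function. -/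
def kN {l m : ℕ} (k : Fin l → Fin m) (a : ℕ) : ℕ :=
  if h : a < l then (k ⟨a, h⟩ : ℕ) else 0

/-- The "good sequence" predicate: nondecreasing and `a ≤ f a`. -/
def GFP (l : ℕ) (f : ℕ → ℕ) : Prop :=
  (∀ a b : ℕ, a ≤ b → b < l → f a ≤ f b) ∧ (∀ a : ℕ, a < l → a ≤ f a)

/-- The finset of good sequences of length `l` with values in `Fin m`. -/
def GF (l m : ℕ) : Finset (Fin l → Fin m) :=
  Finset.univ.filter (fun k => GFP l (kN k))

lemma mem_GF {l m : ℕ} {k : Fin l → Fin m} : k ∈ GF l m ↔ GFP l (kN k) := by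
  simp [GF]

lemma kN_lt {l m : ℕ} (k : Fin l → Fin m) {a : ℕ} (h : a < l) : kN k a < m := by
  simp only [kN, dif_pos h]; exact (k ⟨a, h⟩).isLt

lemma kN_apply {l m : ℕ} (k : Fin l → Fin m) (a : Fin l) : kN k (a : ℕ) = (k a : ℕ) := by
  simp only [kN, dif_pos a.isLt, Fin.eta]

lemma kN_ext {l m : ℕ} {k k' : Fin l → Fin m}
    (h : ∀ a : ℕ, a < l → kN k a = kN k' a) : k = k' := by
  funext a
  have := h a a.isLt
  simp only [kN, dif_pos a.isLt, Fin.eta] at this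
  exact Fin.ext this

/-- The index of the first fixed point of `kN k`, or `n` if none exists. -/
def idx {n : ℕ} (k : Fin n → Fin (n+1)) : ℕ :=
  if h : ∃ a, a < n ∧ kN k a = a then Nat.find h else n

lemma idx_le {n : ℕ} (k : Fin n → Fin (n+1)) : idx k ≤ n := by
  unfold idx; split
  · next h => exact (Nat.find_spec h).1.le
  · exact le_rfl

lemma idx_min {n : ℕ} (k : Fin n → Fin (n+1)) {a : ℕ} (ha : a < idx k) (han : a < n) :
    kN k a ≠ a := by
  unfold idx at ha; split at ha
  · next h => exact fun hc => (Nat.find_min h ha) ⟨han, hc⟩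
  · next h => exact fun hc => h ⟨a, han, hc⟩

lemma idx_spec {n : ℕ} (k : Fin n → Fin (n+1)) (h : idx k < n) : kN k (idx k) = idx k := by
  by_cases hex : ∃ a, a < n ∧ kN k a = a
  · rw [idx, dif_pos hex]; exact (Nat.find_spec hex).2
  · rw [idx, dif_neg hex] at h; omega

lemma idx_eq {n : ℕ} (k : Fin n → Fin (n+1)) (i : ℕ) (hin : i ≤ n)
    (h1 : ∀ a, a < i → kN k a ≠ a) (h2 : i < n → kN k i = i) : idx k = i := by
  rcases lt_or_eq_of_le hin with hlt | rfl
  · have hex : ∃ a, a < n ∧ kN k a = a := ⟨i, hlt, h2 hlt⟩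
    unfold idx; rw [dif_pos hex]
    have h3 : Nat.find hex ≤ i := Nat.find_le ⟨hlt, h2 hlt⟩
    have h4 : ¬ Nat.find hex < i := by
      intro hc
      exact h1 _ hc (Nat.find_spec hex).2
    omega
  · unfold idx; split
    · next h =>
      obtain ⟨a, han, ha⟩ := h
      exact absurd ha (h1 a han)
    · rfl

/-- `cnt j` is the number of good sequences of length `j - 1` with values `< j`. -/
def cnt (j : ℕ) : ℕ := (GF (j - 1) j).card

lemma cnt_zero : cnt 0 = 1 := by
  have : GF 0 0 = Finset.univ := by
    apply Finset.filter_true_of_mem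
    intro k _
    exact ⟨fun a b _ hb => absurd hb (Nat.not_lt_zero b),
           fun a ha => absurd ha (Nat.not_lt_zero a)⟩
  rw [cnt, this, Finset.card_univ]
  simp

/-- Reconstruction of a sequence from first-return data. -/
def recon (i : ℕ) (u v : ℕ → ℕ) (a : ℕ) : ℕ :=
  if a < i - 1 then u a + 1 else if a ≤ i then i else v (a - i - 1) + i + 1

/-- Forward map of the first-return decomposition. -/
def Fwd (n i : ℕ) (k : Fin n → Fin (n+1)) :
    (Fin (i-1) → Fin i) × (Fin (n-i-1) → Fin (n-i)) :=
  (fun b => ⟨(kN k b - 1) % i, Nat.mod_lt _ (by have := b.isLt; omega)⟩,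
   fun b => ⟨(kN k (i+1+b) - (i+1)) % (n-i), Nat.mod_lt _ (by have := b.isLt; omega)⟩)

/-- Backward map of the first-return decomposition. -/
def Bwd (n i : ℕ) (uv : (Fin (i-1) → Fin i) × (Fin (n-i-1) → Fin (n-i))) :
    Fin n → Fin (n+1) :=
  fun a => ⟨recon i (kN uv.1) (kN uv.2) a % (n+1), Nat.mod_lt _ (by omega)⟩

lemma kN_Fwd1 {n i : ℕ} (k : Fin n → Fin (n+1)) {b : ℕ} (hb : b < i - 1) :
    kN (Fwd n i k).1 b = (kN k b - 1) % i := by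
  simp only [kN, dif_pos hb, Fwd]

lemma kN_Fwd2 {n i : ℕ} (k : Fin n → Fin (n+1)) {b : ℕ} (hb : b < n - i - 1) :
    kN (Fwd n i k).2 b = (kN k (i+1+b) - (i+1)) % (n-i) := by
  simp only [kN, dif_pos hb, Fwd]

lemma kN_Bwd {n i : ℕ} (uv : (Fin (i-1) → Fin i) × (Fin (n-i-1) → Fin (n-i))) {a : ℕ}
    (ha : a < n) : kN (Bwd n i uv) a = recon i (kN uv.1) (kN uv.2) a % (n+1) := by
  simp only [kN, dif_pos ha, Bwd]

section fiberlemmas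

variable {n i : ℕ} (hi : i ≤ n) {k : Fin n → Fin (n+1)}

/-- Facts about a member of the fiber. -/
lemma fiber_facts (hk : k ∈ GF n (n+1)) (hidx : idx k = i) :
    (∀ a b : ℕ, a ≤ b → b < n → kN k a ≤ kN k b) ∧ (∀ a, a < n → a ≤ kN k a) ∧
    (∀ a, a < n → kN k a ≤ n) ∧ (∀ a, a < i → a + 1 ≤ kN k a) ∧
    (∀ a, a < i → kN k a ≤ i) ∧ (i < n → kN k i = i) := by
  obtain ⟨hmono, hge⟩ := mem_GF.mp hk
  have hile : i ≤ n := hidx ▸ idx_le k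
  have hbd : ∀ a, a < n → kN k a ≤ n := fun a ha => Nat.lt_succ_iff.mp (kN_lt k ha)
  have hspec : i < n → kN k i = i := fun h => by rw [← hidx] at h ⊢; exact idx_spec k h
  have f1 : ∀ a, a < i → a + 1 ≤ kN k a := by
    intro a ha
    have han : a < n := lt_of_lt_of_le ha hile
    have := idx_min k (hidx ▸ ha) han
    have := hge a han
    omega
  have f4 : ∀ a, a < i → kN k a ≤ i := by
    intro a ha
    rcases lt_or_eq_of_le hile with h | h
    · have := hmono a i (le_of_lt ha) h
      rw [hspec h] at this
      exact this
    · subst h; exact hbd a ha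
  exact ⟨hmono, hge, hbd, f1, f4, hspec⟩

lemma Fwd_mem (hk : k ∈ GF n (n+1)) (hidx : idx k = i) :
    Fwd n i k ∈ (GF (i-1) i) ×ˢ (GF (n-i-1) (n-i)) := by
  obtain ⟨hmono, hge, hbd, f1, f4, hspec⟩ := fiber_facts hk hidx
  have hile : i ≤ n := hidx ▸ idx_le k
  rw [Finset.mem_product, mem_GF, mem_GF]
  have e1 : ∀ b, b < i - 1 → kN (Fwd n i k).1 b = kN k b - 1 := by
    intro b hb
    rw [kN_Fwd1 k hb]
    have h4 := f4 b (by omega)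
    have h1 := f1 b (by omega)
    exact Nat.mod_eq_of_lt (by omega)
  have e2 : ∀ b, b < n - i - 1 → kN (Fwd n i k).2 b = kN k (i+1+b) - (i+1) := by
    intro b hb
    rw [kN_Fwd2 k hb]
    have h3 := hbd (i+1+b) (by omega)
    have h1 := hge (i+1+b) (by omega)
    exact Nat.mod_eq_of_lt (by omega)
  refine ⟨⟨?_, ?_⟩, ?_, ?_⟩
  · intro a b hab hb
    rw [e1 a (by omega), e1 b hb]
    have := hmono a b hab (by omega)
    omega
  · intro a ha
    rw [e1 a ha]
    have := f1 a (by omega)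
    omega
  · intro a b hab hb
    rw [e2 a (by omega), e2 b hb]
    have := hmono (i+1+a) (i+1+b) (by omega) (by omega)
    omega
  · intro a ha
    rw [e2 a ha]
    have := hge (i+1+a) (by omega)
    omega

end fiberlemmas

section bwdlemmas

variable {n i : ℕ} {uv : (Fin (i-1) → Fin i) × (Fin (n-i-1) → Fin (n-i))}

lemma Bwd_mem (hin : i ≤ n) (huv : uv ∈ (GF (i-1) i) ×ˢ (GF (n-i-1) (n-i))) :
    Bwd n i uv ∈ (GF n (n+1)).filter (fun k => idx k = i) := by
  rw [Finset.mem_product, mem_GF, mem_GF] at huv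
  obtain ⟨⟨umono, uge⟩, vmono, vge⟩ := huv
  have ubd : ∀ b, b < i - 1 → kN uv.1 b < i := fun b hb => kN_lt uv.1 hb
  have vbd : ∀ b, b < n - i - 1 → kN uv.2 b < n - i := fun b hb => kN_lt uv.2 hb
  have rbd : ∀ a, a < n → recon i (kN uv.1) (kN uv.2) a ≤ n := by
    intro a ha
    unfold recon
    split_ifs with h1 h2
    · have := ubd a h1; omega
    · omega
    · have := vbd (a - i - 1) (by omega); omega
  have ekN : ∀ a, a < n → kN (Bwd n i uv) a = recon i (kN uv.1) (kN uv.2) a := by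
    intro a ha
    rw [kN_Bwd uv ha]
    exact Nat.mod_eq_of_lt (by have := rbd a ha; omega)
  rw [Finset.mem_filter, mem_GF]
  refine ⟨⟨?_, ?_⟩, ?_⟩
  · -- monotone
    intro a b hab hb
    rw [ekN a (by omega), ekN b hb]
    unfold recon
    by_cases ha1 : a < i - 1
    · by_cases hb1 : b < i - 1
      · rw [if_pos ha1, if_pos hb1]
        have := umono a b hab hb1
        omega
      · have hua := ubd a ha1
        by_cases hb2 : b ≤ i
        · rw [if_pos ha1, if_neg hb1, if_pos hb2]; omega
        · rw [if_pos ha1, if_neg hb1, if_neg hb2]; omega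
    · by_cases ha2 : a ≤ i
      · by_cases hb1 : b < i - 1
        · omega
        · by_cases hb2 : b ≤ i
          · rw [if_neg ha1, if_pos ha2, if_neg hb1, if_pos hb2]
          · rw [if_neg ha1, if_pos ha2, if_neg hb1, if_neg hb2]; omega
      · have hb1 : ¬ b < i - 1 := by omega
        have hb2 : ¬ b ≤ i := by omega
        rw [if_neg ha1, if_neg ha2, if_neg hb1, if_neg hb2]
        have := vmono (a - i - 1) (b - i - 1) (by omega) (by omega)
        omega
  · -- a ≤ recon a
    intro a ha
    rw [ekN a ha]
    unfold recon
    split_ifs with h1 h2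
    · have := uge a h1; omega
    · omega
    · have := vge (a - i - 1) (by omega); omega
  · -- idx = i
    apply idx_eq _ _ hin
    · intro a hai
      rw [ekN a (by omega)]
      unfold recon
      split_ifs with h1 h2
      · have := uge a h1; omega
      · omega
      · omega
    · intro hlt
      rw [ekN i hlt]
      unfold recon
      rw [if_neg (by omega), if_pos (le_refl i)]

lemma Fwd_Bwd (hin : i ≤ n) (huv : uv ∈ (GF (i-1) i) ×ˢ (GF (n-i-1) (n-i))) :
    Fwd n i (Bwd n i uv) = uv := by
  rw [Finset.mem_product, mem_GF, mem_GF] at huv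
  obtain ⟨⟨umono, uge⟩, vmono, vge⟩ := huv
  have ubd : ∀ b, b < i - 1 → kN uv.1 b < i := fun b hb => kN_lt uv.1 hb
  have vbd : ∀ b, b < n - i - 1 → kN uv.2 b < n - i := fun b hb => kN_lt uv.2 hb
  have ekN : ∀ a, a < n → kN (Bwd n i uv) a = recon i (kN uv.1) (kN uv.2) a := by
    intro a ha
    rw [kN_Bwd uv ha]
    apply Nat.mod_eq_of_lt
    unfold recon
    split_ifs with h1 h2
    · have := ubd a h1; omega
    · omega
    · have := vbd (a - i - 1) (by omega); omega
  have h1 : (Fwd n i (Bwd n i uv)).1 = uv.1 := by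
    apply kN_ext
    intro b hb
    rw [kN_Fwd1 _ hb, ekN b (by omega)]
    unfold recon
    rw [if_pos hb]
    have := ubd b hb
    simp only [Nat.add_sub_cancel]
    exact Nat.mod_eq_of_lt this
  have h2 : (Fwd n i (Bwd n i uv)).2 = uv.2 := by
    apply kN_ext
    intro b hb
    rw [kN_Fwd2 _ hb, ekN (i+1+b) (by omega)]
    unfold recon
    rw [if_neg (by omega), if_neg (by omega)]
    have harg : i + 1 + b - i - 1 = b := by omega
    rw [harg]
    have := vbd b hb
    have harg2 : kN uv.2 b + i + 1 - (i + 1) = kN uv.2 b := by omega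
    rw [harg2]
    exact Nat.mod_eq_of_lt this
  exact Prod.ext h1 h2

lemma Bwd_Fwd {k : Fin n → Fin (n+1)} (hk : k ∈ GF n (n+1)) (hidx : idx k = i) :
    Bwd n i (Fwd n i k) = k := by
  obtain ⟨hmono, hge, hbd, f1, f4, hspec⟩ := fiber_facts hk hidx
  have hile : i ≤ n := hidx ▸ idx_le k
  have e1 : ∀ b, b < i - 1 → kN (Fwd n i k).1 b = kN k b - 1 := by
    intro b hb
    rw [kN_Fwd1 k hb]
    have h4 := f4 b (by omega)
    have h1 := f1 b (by omega)
    exact Nat.mod_eq_of_lt (by omega)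
  have e2 : ∀ b, b < n - i - 1 → kN (Fwd n i k).2 b = kN k (i+1+b) - (i+1) := by
    intro b hb
    rw [kN_Fwd2 k hb]
    have h3 := hbd (i+1+b) (by omega)
    have h1 := hge (i+1+b) (by omega)
    exact Nat.mod_eq_of_lt (by omega)
  apply kN_ext
  intro a ha
  rw [kN_Bwd _ ha]
  have hrec : recon i (kN (Fwd n i k).1) (kN (Fwd n i k).2) a = kN k a := by
    unfold recon
    by_cases h1 : a < i - 1
    · rw [if_pos h1, e1 a h1]
      have := f1 a (by omega)
      omega
    · by_cases h2 : a ≤ i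
      · rw [if_neg h1, if_pos h2]
        rcases Nat.lt_or_ge a i with h3 | h3
        · -- a = i - 1, i ≥ 1
          have ha1 : a = i - 1 := by omega
          have hf1 := f1 a h3
          have hf4 := f4 a h3
          omega
        · -- a = i, i < n
          have ha1 : a = i := by omega
          subst ha1
          exact (hspec ha).symm
      · rw [if_neg h1, if_neg h2, e2 (a - i - 1) (by omega)]
        have harg : i + 1 + (a - i - 1) = a := by omega
        rw [harg]
        have := hge a ha
        omega
  rw [hrec]
  exact Nat.mod_eq_of_lt (by have := hbd a ha; omega)

end bwdlemmas

lemma fiber_card (n i : ℕ) (hi : i ≤ n) :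
    ((GF n (n+1)).filter (fun k => idx k = i)).card = cnt i * cnt (n - i) := by
  have hc : cnt i * cnt (n - i) = ((GF (i-1) i) ×ˢ (GF (n-i-1) (n-i))).card := by
    rw [Finset.card_product, cnt, cnt]
  rw [hc]
  apply Finset.card_nbij' (Fwd n i) (Bwd n i)
  · intro k hk
    rw [Finset.mem_coe, Finset.mem_filter] at hk
    exact Fwd_mem hk.1 hk.2
  · intro uv huv
    exact Bwd_mem hi huv
  · intro k hk
    rw [Finset.mem_coe, Finset.mem_filter] at hk
    exact Bwd_Fwd hk.1 hk.2
  · intro uv huv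
    exact Fwd_Bwd hi huv

lemma GF_card_succ (n : ℕ) :
    (GF n (n+1)).card = ∑ i ∈ Finset.range (n+1), cnt i * cnt (n - i) := by
  rw [Finset.card_eq_sum_card_fiberwise (f := idx) (t := Finset.range (n+1))
    (fun k _ => Finset.mem_range.mpr (Nat.lt_succ_of_le (idx_le k)))]
  exact Finset.sum_congr rfl fun i hi => fiber_card n i (Nat.lt_succ_iff.mp (Finset.mem_range.mp hi))

lemma cnt_eq_catalan : ∀ j, cnt j = catalan j := by
  intro j
  induction j using Nat.strong_induction_on with
  | _ j ih =>
    match j with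
    | 0 => rw [cnt_zero, catalan_zero]
    | n + 1 =>
      have h1 : cnt (n+1) = (GF n (n+1)).card := rfl
      rw [h1, GF_card_succ, catalan_succ,
        Fin.sum_univ_eq_sum_range (fun i => catalan i * catalan (n - i)) (n+1)]
      refine Finset.sum_congr rfl fun i hi => ?_
      have hik := Finset.mem_range.mp hi
      rw [ih i (by omega), ih (n - i) (by omega)]

/-! ### Part 2: ideals as height sequences -/

/-- Column height of a finset at abscissa `a`. -/
def hgt (I : Finset (ℤ × ℤ)) (a : ℕ) : ℕ := (I.filter (fun p => p.1 = (a:ℤ))).card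

lemma mem_W2 {n : ℕ} {p : ℤ × ℤ} :
    p ∈ W2 n ↔ 0 ≤ p.1 ∧ 0 ≤ p.2 ∧ p.1 + p.2 ≤ (n:ℤ) - 2 := by
  simp only [W2, Finset.mem_filter, Finset.mem_product, Finset.mem_Icc]
  constructor
  · rintro ⟨⟨⟨h1, h2⟩, h3, h4⟩, h5⟩; exact ⟨h1, h3, h5⟩
  · rintro ⟨h1, h2, h3⟩; refine ⟨⟨⟨h1, by omega⟩, h2, by omega⟩, h3⟩

lemma step2_mono {n : ℕ} {u v : ℤ × ℤ} (h : step2 BGvec (W2 n) u v) :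
    v.1 ≤ u.1 ∧ u.1 + u.2 ≤ v.1 + v.2 := by
  obtain ⟨-, -, e, he, rfl⟩ := h
  simp only [BGvec, Set.mem_insert_iff, Set.mem_singleton_iff] at he
  rcases he with rfl | rfl <;> simp [Prod.fst_add, Prod.snd_add] <;> omega

lemma le2_path {n : ℕ} (m : ℕ) : ∀ u v : ℤ × ℤ, u ∈ W2 n → v ∈ W2 n → v.1 ≤ u.1 →
    u.1 + u.2 ≤ v.1 + v.2 → (u.1 - v.1 + (v.1 + v.2 - (u.1 + u.2))).toNat = m →
    Relation.ReflTransGen (step2 BGvec (W2 n)) u v := by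
  induction m with
  | zero =>
    intro u v hu hv h1 h2 hm
    have hu' := mem_W2.mp hu
    have hv' := mem_W2.mp hv
    obtain ⟨a1, a2, a3⟩ := hu'
    obtain ⟨b1, b2, b3⟩ := hv'
    have h3 : u.1 = v.1 ∧ u.2 = v.2 := by omega
    rw [Prod.ext h3.1 h3.2]
  | succ m ih =>
    intro u v hu hv h1 h2 hm
    have hu' := mem_W2.mp hu
    have hv' := mem_W2.mp hv
    by_cases hf : v.1 < u.1
    · set w : ℤ × ℤ := (u.1 - 1, u.2 + 1) with hw
      have hwW : w ∈ W2 n := mem_W2.mpr (by simp [hw]; omega)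
      have hstep : step2 BGvec (W2 n) u w := by
        refine ⟨hu, hwW, (-1, 1), by simp [BGvec], ?_⟩
        simp [hw, Prod.ext_iff]; omega
      exact Relation.ReflTransGen.head hstep
        (ih w v hwW hv (by simp [hw]; omega) (by simp [hw]; omega) (by simp [hw]; omega))
    · have hveq : v.1 = u.1 := by omega
      set w : ℤ × ℤ := (u.1, u.2 + 1) with hw
      have hwW : w ∈ W2 n := mem_W2.mpr (by simp [hw]; omega)
      have hstep : step2 BGvec (W2 n) u w := by
        refine ⟨hu, hwW, (0, 1), by simp [BGvec], ?_⟩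
        simp [hw, Prod.ext_iff]
      exact Relation.ReflTransGen.head hstep
        (ih w v hwW hv (by simp [hw]; omega) (by simp [hw]; omega) (by simp [hw]; omega))

lemma rtg_mono {n : ℕ} {u v : ℤ × ℤ} (hr : Relation.ReflTransGen (step2 BGvec (W2 n)) u v) :
    v.1 ≤ u.1 ∧ u.1 + u.2 ≤ v.1 + v.2 := by
  induction hr with
  | refl => omega
  | tail h hstep ih =>
    have := step2_mono hstep
    omega

lemma le2_char {n : ℕ} {u v : ℤ × ℤ} :
    le2 BGvec (W2 n) u v ↔ u ∈ W2 n ∧ v ∈ W2 n ∧ v.1 ≤ u.1 ∧ u.1 + u.2 ≤ v.1 + v.2 := by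
  constructor
  · rintro ⟨hu, hv, hr⟩
    exact ⟨hu, hv, rtg_mono hr⟩
  · rintro ⟨hu, hv, h1, h2⟩
    exact ⟨hu, hv, le2_path _ u v hu hv h1 h2 rfl⟩

lemma mem_ideals2 {n : ℕ} {I : Finset (ℤ × ℤ)} :
    I ∈ ideals2 BGvec (W2 n) ↔ I ⊆ W2 n ∧
      ∀ u v : ℤ × ℤ, le2 BGvec (W2 n) u v → v ∈ I → u ∈ I := by
  simp [ideals2, IsIdeal2, Finset.mem_powerset, and_assoc]

lemma dc_range {s : Finset ℕ} (h : ∀ x ∈ s, ∀ y, y < x → y ∈ s) :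
    s = Finset.range s.card := by
  have hsub : s ⊆ Finset.range s.card := by
    intro x hx
    have hsub2 : Finset.range (x+1) ⊆ s := by
      intro y hy
      rcases Nat.lt_or_ge y x with hy' | hy'
      · exact h x hx y hy'
      · have : y = x := by have := Finset.mem_range.mp hy; omega
        rwa [this]
    have := Finset.card_le_card hsub2
    rw [Finset.card_range] at this
    exact Finset.mem_range.mpr (by omega)
  exact Finset.eq_of_subset_of_card_le hsub (by rw [Finset.card_range])

lemma col_mem {n : ℕ} {I : Finset (ℤ × ℤ)} (hI : I ∈ ideals2 BGvec (W2 n)) (a : ℕ) (b : ℤ) :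
    ((a:ℤ), b) ∈ I ↔ 0 ≤ b ∧ b < (hgt I a : ℤ) := by
  obtain ⟨hsub, hdc⟩ := mem_ideals2.mp hI
  set s : Finset ℕ := (I.filter (fun p => p.1 = (a:ℤ))).image (fun p => p.2.toNat) with hs
  have hcard : s.card = hgt I a := by
    rw [hs, hgt]
    apply Finset.card_image_of_injOn
    intro p hp q hq hpq
    simp only [Finset.mem_coe, Finset.mem_filter] at hp hq
    dsimp only at hpq
    have hp2 : 0 ≤ p.2 := (mem_W2.mp (hsub hp.1)).2.1
    have hq2 : 0 ≤ q.2 := (mem_W2.mp (hsub hq.1)).2.1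
    have h22 : p.2 = q.2 := by omega
    exact Prod.ext (hp.2.trans hq.2.symm) h22
  have hmem : ∀ c : ℤ, (((a:ℤ), c) ∈ I ↔ 0 ≤ c ∧ c.toNat ∈ s) := by
    intro c
    constructor
    · intro hb
      have hb0 : 0 ≤ c := (mem_W2.mp (hsub hb)).2.1
      exact ⟨hb0, Finset.mem_image.mpr ⟨_, Finset.mem_filter.mpr ⟨hb, rfl⟩, rfl⟩⟩
    · rintro ⟨hb0, hbs⟩
      obtain ⟨p, hp, hpe⟩ := Finset.mem_image.mp hbs
      rw [Finset.mem_filter] at hp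
      have hp2 : 0 ≤ p.2 := (mem_W2.mp (hsub hp.1)).2.1
      have hpc : p = ((a:ℤ), c) := Prod.ext hp.2 (by omega)
      exact hpc ▸ hp.1
  have hdcs : ∀ x ∈ s, ∀ y, y < x → y ∈ s := by
    intro x hx y hy
    obtain ⟨p, hp, hpe⟩ := Finset.mem_image.mp hx
    rw [Finset.mem_filter] at hp
    obtain ⟨hpI, hpa⟩ := hp
    obtain ⟨hw1, hw2, hw3⟩ := mem_W2.mp (hsub hpI)
    have hu : ((a:ℤ), (y:ℤ)) ∈ I := by
      apply hdc _ p _ hpI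
      rw [le2_char]
      exact ⟨mem_W2.mpr ⟨by omega, by omega, by omega⟩, hsub hpI, by omega, by omega⟩
    have hys := (hmem (y:ℤ)).mp hu
    simpa using hys.2
  have hrange := dc_range hdcs
  rw [hcard] at hrange
  rw [hmem b, hrange, Finset.mem_range]
  omega

lemma hgt_bd {n : ℕ} {I : Finset (ℤ × ℤ)} (hI : I ∈ ideals2 BGvec (W2 n)) {a : ℕ}
    (ha : a < n - 1) : hgt I a + a ≤ n - 1 := by
  by_cases h0 : hgt I a = 0
  · omega
  · have h1 : ((a:ℤ), (hgt I a : ℤ) - 1) ∈ I := (col_mem hI a _).mpr ⟨by omega, by omega⟩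
    obtain ⟨h2, h3, h4⟩ := mem_W2.mp ((mem_ideals2.mp hI).1 h1)
    simp only at h2 h3 h4
    omega

lemma hgt_mono {n : ℕ} {I : Finset (ℤ × ℤ)} (hI : I ∈ ideals2 BGvec (W2 n)) {a b : ℕ}
    (hab : a ≤ b) (hb : b < n - 1) : hgt I a + a ≤ hgt I b + b := by
  by_cases h0 : hgt I a = 0
  · omega
  rcases le_or_gt (hgt I a + a) b with h1 | h1
  · omega
  · have ha : a < n - 1 := lt_of_le_of_lt hab hb
    have hbd := hgt_bd hI ha
    have hv : ((a:ℤ), (hgt I a:ℤ) - 1) ∈ I := (col_mem hI a _).mpr ⟨by omega, by omega⟩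
    have hu : ((b:ℤ), (hgt I a : ℤ) + a - 1 - b) ∈ I := by
      apply (mem_ideals2.mp hI).2 _ _ _ hv
      rw [le2_char]
      refine ⟨mem_W2.mpr ⟨?_, ?_, ?_⟩, (mem_ideals2.mp hI).1 hv, ?_, ?_⟩ <;>
        simp only <;> omega
    have hub := (col_mem hI b _).mp hu
    omega

/-- From an ideal to a sequence. -/
def Phi (n : ℕ) (I : Finset (ℤ × ℤ)) : Fin (n-1) → Fin n :=
  fun a => ⟨(hgt I a + a) % n, Nat.mod_lt _ (by have := a.isLt; omega)⟩

/-- From a sequence to an ideal. -/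
def Psi (n : ℕ) (k : Fin (n-1) → Fin n) : Finset (ℤ × ℤ) :=
  (W2 n).filter (fun p => p.1 + p.2 < (kN k p.1.toNat : ℤ))

lemma kN_Phi {n : ℕ} {I : Finset (ℤ × ℤ)} (hI : I ∈ ideals2 BGvec (W2 n)) {a : ℕ}
    (ha : a < n - 1) : kN (Phi n I) a = hgt I a + a := by
  have hbd := hgt_bd hI ha
  simp only [kN, dif_pos ha, Phi]
  exact Nat.mod_eq_of_lt (by omega)

lemma Phi_mem {n : ℕ} {I : Finset (ℤ × ℤ)} (hI : I ∈ ideals2 BGvec (W2 n)) :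
    Phi n I ∈ GF (n-1) n := by
  rw [mem_GF]
  constructor
  · intro a b hab hb
    rw [kN_Phi hI (lt_of_le_of_lt hab hb), kN_Phi hI hb]
    exact hgt_mono hI hab hb
  · intro a ha
    rw [kN_Phi hI ha]
    omega

lemma Psi_mem {n : ℕ} {k : Fin (n-1) → Fin n} (hk : k ∈ GF (n-1) n) :
    Psi n k ∈ ideals2 BGvec (W2 n) := by
  rw [mem_ideals2]
  refine ⟨Finset.filter_subset _ _, ?_⟩
  intro u v hle hv
  rw [le2_char] at hle
  obtain ⟨huW, hvW, h1, h2⟩ := hle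
  rw [Psi, Finset.mem_filter] at hv ⊢
  refine ⟨huW, ?_⟩
  obtain ⟨hu1, hu2, hu3⟩ := mem_W2.mp huW
  obtain ⟨hv1, hv2, hv3⟩ := mem_W2.mp hvW
  obtain ⟨hmono, hge⟩ := mem_GF.mp hk
  have hlt : u.1.toNat < n - 1 := by omega
  have hm := hmono v.1.toNat u.1.toNat (by omega) hlt
  have hv4 := hv.2
  omega

lemma Psi_Phi {n : ℕ} {I : Finset (ℤ × ℤ)} (hI : I ∈ ideals2 BGvec (W2 n)) :
    Psi n (Phi n I) = I := by
  ext p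
  obtain ⟨x, y⟩ := p
  rw [Psi, Finset.mem_filter]
  constructor
  · rintro ⟨hpW, hlt⟩
    obtain ⟨h1, h2, h3⟩ := mem_W2.mp hpW
    simp only at h1 h2 h3 hlt
    have ha : (x, y).1.toNat < n - 1 := by simp only; omega
    rw [kN_Phi hI ha] at hlt
    have hmem := (col_mem hI x.toNat y).mpr ⟨h2, by simp only at hlt; omega⟩
    have hx : ((x.toNat : ℤ)) = x := by omega
    rwa [hx] at hmem
  · intro hp
    have hpW := (mem_ideals2.mp hI).1 hp
    obtain ⟨h1, h2, h3⟩ := mem_W2.mp hpW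
    simp only at h1 h2 h3
    have ha : (x, y).1.toNat < n - 1 := by simp only; omega
    refine ⟨hpW, ?_⟩
    rw [kN_Phi hI ha]
    have hx : ((x.toNat : ℤ)) = x := by omega
    have hmem := (col_mem hI x.toNat y).mp (by rwa [hx])
    simp only
    omega

lemma Phi_Psi {n : ℕ} {k : Fin (n-1) → Fin n} (hk : k ∈ GF (n-1) n) :
    Phi n (Psi n k) = k := by
  have hI := Psi_mem hk
  apply kN_ext
  intro a ha
  obtain ⟨hmono, hge⟩ := mem_GF.mp hk
  have hlt : kN k a < n := kN_lt k ha
  have hgea : a ≤ kN k a := hge a ha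
  have hcol : (Psi n k).filter (fun p => p.1 = (a:ℤ)) =
      (Finset.Ico (0:ℤ) ((kN k a : ℤ) - a)).image (fun b => ((a:ℤ), b)) := by
    ext q
    obtain ⟨x, y⟩ := q
    simp only [Psi, Finset.mem_filter, Finset.mem_image, Finset.mem_Ico, mem_W2]
    constructor
    · rintro ⟨⟨⟨hq1, hq2, hq3⟩, hq4⟩, hq5⟩
      refine ⟨y, ⟨hq2, ?_⟩, ?_⟩
      · have hxa : (x, y).1.toNat = a := by omega
        rw [hxa] at hq4
        omega
      · exact Prod.ext hq5.symm rfl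
    · rintro ⟨b, ⟨hb1, hb2⟩, hbe⟩
      rw [Prod.ext_iff] at hbe
      simp only at hbe
      obtain ⟨hbe1, hbe2⟩ := hbe
      subst hbe1; subst hbe2
      have htn : ((a:ℤ)).toNat = a := by omega
      simp only [htn]
      exact ⟨⟨⟨by omega, hb1, by omega⟩, by omega⟩, by simp⟩
  rw [kN_Phi hI ha, hgt, hcol,
    Finset.card_image_of_injective _ (fun b c h => (Prod.ext_iff.mp h).2), Int.card_Ico]
  omega

end CatAux

/-- The number of order ideals of `P_n({b,g})` is the Catalan number
`C_n = (1/(n+1))·binomial(2n,n)`. -/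
theorem stmt2 (n : ℕ) (hn : 1 ≤ n) :
    (ideals2 BGvec (W2 n)).card = catalan n := by
  have h1 : (ideals2 BGvec (W2 n)).card = (GF (n-1) n).card :=
    Finset.card_nbij' (Phi n) (Psi n) (fun I hI => Phi_mem hI) (fun k hk => Psi_mem hk)
      (fun I hI => Psi_Phi hI) (fun k hk => Phi_Psi hk)
  rw [h1, ← cnt, cnt_eq_catalan]
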